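/- Let P be a probability measure on a compact metric space M, B ⊆ M a Borel set with P(B) > 0, and let P^B be the conditional (truncated) measure P^B(A) = P(A ∩ B)/P(B). Then W(P, P^B) ≤ diam(M) · P(Bᶜ), where W is the Kantorovich distance. -/
import Mathlib


open MeasureTheory

/-- The Kantorovich (L¹-Wasserstein) distance between two measures. -/
noncomputable def kantorovich {M : Type*} [MetricSpace M] [MeasurableSpace M]
    (P Q : Measure M) : ℝ :=
  sInf {c : ℝ | ∃ π : Measure (M × M),
    π.map Prod.fst = P ∧ π.map Prod.snd = Q ∧ c = ∫ p, dist p.1 p.2 ∂π}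

/-- for the conditional (truncated) measure `P^B = P(·∩B)/P(B)`,
`W(P, P^B) ≤ diam(M) · P(Bᶜ)`. -/
theorem kantorovich_truncation
    {M : Type*} [MetricSpace M] [CompactSpace M] [MeasurableSpace M] [BorelSpace M]
    (P : Measure M) [IsProbabilityMeasure P] (B : Set M) (hB : MeasurableSet B)
    (hPB : 0 < P B) :
    kantorovich P ((P B)⁻¹ • P.restrict B) ≤
      Metric.diam (Set.univ : Set M) * (P Bᶜ).toReal := by
  have hPBne : P B ≠ 0 := hPB.ne'
  have hPBtop : P B ≠ ⊤ := measure_ne_top P B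
  have hinv : (P B)⁻¹ * P B = 1 := ENNReal.inv_mul_cancel hPBne hPBtop
  -- the conditional measure
  set Q : Measure M := (P B)⁻¹ • P.restrict B with hQ
  have hQfin : IsFiniteMeasure Q := by
    constructor
    rw [hQ]
    simp only [Measure.smul_apply, smul_eq_mul, Measure.restrict_apply_univ]
    rw [hinv]
    exact ENNReal.one_lt_top
  haveI := hQfin
  -- the coupling
  set π : Measure (M × M) :=
    (P.restrict B).map (fun z => (z, z)) + (P.restrict Bᶜ).prod Q with hπ
  have hdiag : Measurable (fun z : M => (z, z)) := measurable_id.prodMk measurable_id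
  have hQuniv : Q Set.univ = 1 := by
    rw [hQ]
    simp only [Measure.smul_apply, smul_eq_mul, Measure.restrict_apply_univ]
    exact hinv
  have hfst : π.map Prod.fst = P := by
    rw [hπ, Measure.map_add _ _ measurable_fst, Measure.map_map measurable_fst hdiag,
      Measure.map_fst_prod, hQuniv]
    simp only [Function.comp_def, Measure.map_id', one_smul]
    exact Measure.restrict_add_restrict_compl hB
  have hsnd : π.map Prod.snd = Q := by
    rw [hπ, Measure.map_add _ _ measurable_snd, Measure.map_map measurable_snd hdiag,
      Measure.map_snd_prod]
    simp only [Function.comp_def, Measure.map_id']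
    rw [Measure.restrict_apply_univ]
    -- P.restrict B + P Bᶜ • Q = Q
    rw [hQ, smul_smul]
    have h1 : P Bᶜ = 1 - P B := by
      have := measure_add_measure_compl (μ := P) hB
      rw [measure_univ] at this
      rw [← this, ENNReal.add_sub_cancel_left hPBtop]
    ext s hs
    simp only [Measure.add_apply, Measure.smul_apply, smul_eq_mul]
    have key : 1 + P Bᶜ * (P B)⁻¹ = (P B)⁻¹ := by
      rw [h1]
      rw [ENNReal.sub_mul (fun _ _ => ENNReal.inv_ne_top.mpr hPBne), one_mul,
        ENNReal.mul_inv_cancel hPBne hPBtop]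
      have hle : 1 ≤ (P B)⁻¹ := ENNReal.one_le_inv.mpr prob_le_one
      exact add_tsub_cancel_of_le hle
    calc P.restrict B s + P Bᶜ * (P B)⁻¹ * P.restrict B s
        = (1 + P Bᶜ * (P B)⁻¹) * P.restrict B s := by ring
      _ = (P B)⁻¹ * P.restrict B s := by rw [key]
  -- the cost of this coupling
  have hdist_cont : Continuous (fun p : M × M => dist p.1 p.2) := continuous_dist.comp
    (continuous_fst.prodMk continuous_snd)
  have hbd : Bornology.IsBounded (Set.univ : Set M) := isCompact_univ.isBounded
  have hcost : (∫ p, dist p.1 p.2 ∂π) ≤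
      Metric.diam (Set.univ : Set M) * (P Bᶜ).toReal := by
    have hint1 : Integrable (fun p : M × M => dist p.1 p.2)
        ((P.restrict B).map (fun z => (z, z))) := by
      haveI : IsFiniteMeasure ((P.restrict B).map (fun z => (z, z))) :=
        Measure.isFiniteMeasure_map _ _
      exact hdist_cont.integrable_of_hasCompactSupport
        (IsClosed.isCompact (isClosed_tsupport _))
    have hint2 : Integrable (fun p : M × M => dist p.1 p.2)
        ((P.restrict Bᶜ).prod Q) := by
      haveI : IsFiniteMeasure ((P.restrict Bᶜ).prod Q) := by infer_instance
      exact hdist_cont.integrable_of_hasCompactSupport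
        (IsClosed.isCompact (isClosed_tsupport _))
    rw [hπ, integral_add_measure hint1 hint2]
    have h0 : (∫ p, dist p.1 p.2 ∂((P.restrict B).map (fun z => (z, z)))) = 0 := by
      rw [integral_map hdiag.aemeasurable hdist_cont.aestronglyMeasurable]
      simp
    rw [h0, zero_add]
    calc (∫ p, dist p.1 p.2 ∂((P.restrict Bᶜ).prod Q))
        ≤ ∫ _, Metric.diam (Set.univ : Set M) ∂((P.restrict Bᶜ).prod Q) := by
          apply integral_mono hint2 (integrable_const _)
          intro p
          exact Metric.dist_le_diam_of_mem hbd (Set.mem_univ _) (Set.mem_univ _)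
      _ = (((P.restrict Bᶜ).prod Q) Set.univ).toReal * Metric.diam (Set.univ : Set M) := by
          rw [integral_const]; rfl
      _ = Metric.diam (Set.univ : Set M) * (P Bᶜ).toReal := by
          rw [← Set.univ_prod_univ, Measure.prod_prod, hQuniv, mul_one,
            Measure.restrict_apply_univ, mul_comm]
  -- conclude
  refine le_trans (csInf_le ?_ ?_) hcost
  · refine ⟨0, fun c hc => ?_⟩
    obtain ⟨π', -, -, rfl⟩ := hc
    exact integral_nonneg fun p => dist_nonneg
  · exact ⟨π, hfst, hsnd, rfl⟩
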